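/- arXiv:2204.04839 — 3 statements merged into one kernel-verified Lean document; each statement's English description precedes it below -/
import Mathlib

section
/- Let n_1, …, n_R be pairwise distinct positive integers and r_1, …, r_R positive integers. For every s ∈ ℂ with −1 < Re(s) < 0, −(sin(πs)/π) · ∫₀^∞ w^(−s−1) ∏_{α=1}^{R} (w+n_α)^(−r_α) dw = Σ_{α=1}^{R} Σ_{ℓ=1}^{r_α} n_α^(−(s+ℓ)) · (∏_{p=1}^{ℓ−1} (s+ℓ−p)/(ℓ−p)) · A_α^{(ℓ)}, where A_α^{(ℓ)} = (1/(r_α−ℓ)!) · (d^{r_α−ℓ}/dw^{r_α−ℓ}) [∏_{β≠α} (w+n_β)^(−r_β)] evaluated at w = −n_α. -/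
open MeasureTheory Real Set Filter Topology Polynomial Finset

namespace PFAux

lemma contDiff_eval (p : ℝ[X]) : ContDiff ℝ (⊤ : ℕ∞) (fun x : ℝ => p.eval x) := by
  induction p using Polynomial.induction_on' with
  | add p q hp hq => simpa using hp.add hq
  | monomial n a =>
    simpa [Polynomial.eval_monomial] using contDiff_const.mul (contDiff_id.pow n)

/-- iterated derivative of a polynomial evaluation. -/
lemma poly_iteratedDeriv (k : ℕ) (p : ℝ[X]) :
    iteratedDeriv k (fun x : ℝ => p.eval x) = fun x => (derivative^[k] p).eval x := by
  induction k with
  | zero => simp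
  | succ k IH =>
    rw [iteratedDeriv_succ, IH, Function.iterate_succ_apply']
    funext x
    exact Polynomial.deriv (𝕜 := ℝ) (p := derivative^[k] p)

lemma iteratedDeriv_of_isOpen {s : Set ℝ} {f : ℝ → ℝ} (n : ℕ) (hs : IsOpen s) {x : ℝ}
    (hx : x ∈ s) : iteratedDerivWithin n f s x = iteratedDeriv n f x := by
  rw [iteratedDerivWithin_eq_iteratedFDerivWithin, iteratedDeriv_eq_iteratedFDeriv,
    iteratedFDerivWithin_of_isOpen n hs hx]

/-- key vanishing lemma: if `u` vanishes to order `> k` at `x` then so does `u * v`. -/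
lemma iteratedDeriv_mul_eq_zero (k : ℕ) :
    ∀ (u v : ℝ → ℝ) (s : Set ℝ) (x : ℝ), IsOpen s → x ∈ s →
    ContDiffOn ℝ (⊤ : ℕ∞) u s → ContDiffOn ℝ (⊤ : ℕ∞) v s →
    (∀ i ≤ k, iteratedDeriv i u x = 0) →
    iteratedDeriv k (fun y => u y * v y) x = 0 := by
  induction k with
  | zero =>
    intro u v s x hs hx hu hv h
    simpa using mul_eq_zero_of_left (by simpa using h 0 le_rfl) (v x)
  | succ k IH =>
    intro u v s x hs hx hu hv h
    have hus : ∀ y ∈ s, DifferentiableAt ℝ u y := fun y hy =>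
      (hu.contDiffAt (hs.mem_nhds hy)).differentiableAt (by simp)
    have hvs : ∀ y ∈ s, DifferentiableAt ℝ v y := fun y hy =>
      (hv.contDiffAt (hs.mem_nhds hy)).differentiableAt (by simp)
    have hev : (fun y => deriv u y * v y + u y * deriv v y) =ᶠ[𝓝 x]
        deriv (fun y => u y * v y) := by
      filter_upwards [hs.mem_nhds hx] with y hy
      exact (deriv_mul (hus y hy) (hvs y hy)).symm
    rw [iteratedDeriv_succ', (hev.iteratedDeriv_eq k).symm]
    have hu' : ContDiffOn ℝ (⊤ : ℕ∞) (deriv u) s := hu.deriv_of_isOpen hs (mod_cast le_top)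
    have hv' : ContDiffOn ℝ (⊤ : ℕ∞) (deriv v) s := hv.deriv_of_isOpen hs (mod_cast le_top)
    have h1 : iteratedDeriv k (fun y => deriv u y * v y) x = 0 := by
      apply IH (deriv u) v s x hs hx hu' hv
      intro i hi
      rw [← iteratedDeriv_succ']
      exact h (i + 1) (Nat.succ_le_succ hi)
    have h2 : iteratedDeriv k (fun y => u y * deriv v y) x = 0 :=
      IH u (deriv v) s x hs hx hu hv' fun i hi => h i (hi.trans k.le_succ)
    have hadd : iteratedDeriv k (fun y => deriv u y * v y + u y * deriv v y) x
        = iteratedDeriv k (fun y => deriv u y * v y) x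
          + iteratedDeriv k (fun y => u y * deriv v y) x := by
      rw [← iteratedDeriv_of_isOpen k hs hx, ← iteratedDeriv_of_isOpen k hs hx,
        ← iteratedDeriv_of_isOpen k hs hx]
      exact iteratedDerivWithin_add hx hs.uniqueDiffOn
        (((hu'.mul hv).contDiffWithinAt hx).of_le (mod_cast le_top)) (((hu.mul hv').contDiffWithinAt hx).of_le (mod_cast le_top))
    rw [hadd, h1, h2, add_zero]

lemma partial_fractions {R : ℕ} (hR : 0 < R) (a : Fin R → ℝ) (ha : Function.Injective a)
    (r : Fin R → ℕ) (hr : ∀ α, 0 < r α) {x : ℝ} (hx : ∀ α, x + a α ≠ 0) :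
    ∏ α, ((x + a α) ^ r α)⁻¹
      = ∑ α, ∑ ℓ ∈ Finset.Icc 1 (r α),
          ((1 / ((r α - ℓ).factorial : ℝ)) *
            iteratedDeriv (r α - ℓ)
              (fun y => ∏ β ∈ Finset.univ.erase α, ((y + a β) ^ r β)⁻¹)
              (-(a α))) * ((x + a α) ^ ℓ)⁻¹ := by
  classical
  set g : Fin R → ℝ → ℝ := fun α y => ∏ β ∈ Finset.univ.erase α, ((y + a β) ^ r β)⁻¹ with hg
  set c : Fin R → ℕ → ℝ := fun α k => (1 / (k.factorial : ℝ)) * iteratedDeriv k (g α) (-(a α))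
    with hc
  set Q : Fin R → ℝ[X] := fun α => ∏ β ∈ Finset.univ.erase α, (X + C (a β)) ^ r β with hQ
  set T : Fin R → ℝ[X] := fun α => ∑ k ∈ range (r α), C (c α k) * (X + C (a α)) ^ k with hT
  -- the open sets
  set U : Fin R → Set ℝ := fun α => {y | ∀ β ∈ Finset.univ.erase α, y + a β ≠ 0} with hU
  have hUopen : ∀ α, IsOpen (U α) := by
    intro α
    have : U α = ⋂ β ∈ (Finset.univ.erase α : Finset (Fin R)), {y : ℝ | y + a β ≠ 0} := by
      ext y; simp [hU]
    rw [this]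
    exact isOpen_biInter_finset fun β _ =>
      isOpen_ne.preimage (continuous_id.add continuous_const)
  have hUmem : ∀ α, -(a α) ∈ U α := by
    intro α β hβ
    have : a β ≠ a α := fun h => (Finset.mem_erase.mp hβ).1 (ha h)
    intro h
    exact this (by linarith)
  have hQeval : ∀ α (y : ℝ), (Q α).eval y = ∏ β ∈ Finset.univ.erase α, (y + a β) ^ r β := by
    intro α y; simp [hQ, Polynomial.eval_prod]
  have hgQ : ∀ α, ∀ y ∈ U α, g α y * (Q α).eval y = 1 := by
    intro α y hy
    rw [hQeval, hg, ← Finset.prod_mul_distrib]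
    exact Finset.prod_eq_one fun β hβ => inv_mul_cancel₀ (pow_ne_zero _ (hy β hβ))
  have hgsmooth : ∀ α, ContDiffOn ℝ (⊤ : ℕ∞) (g α) (U α) := by
    intro α
    apply contDiffOn_prod (𝔸' := ℝ)
    intro β hβ
    exact ((contDiffOn_id.add contDiffOn_const).pow _).inv fun y hy =>
      pow_ne_zero _ (hy β hβ)
  -- iterated derivatives of T α at -(a α)
  have hTeval : ∀ α, ∀ i < r α,
      (derivative^[i] (T α)).eval (-(a α)) = (i.factorial : ℝ) * c α i := by
    intro α i hi
    rw [hT]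
    simp only [Polynomial.iterate_derivative_sum, Polynomial.iterate_derivative_C_mul,
      Polynomial.iterate_derivative_X_add_pow, Polynomial.eval_finset_sum]
    rw [Finset.sum_eq_single i]
    · simp [Nat.descFactorial_self, mul_comm]
    · intro k hk hki
      rcases lt_or_gt_of_ne hki with h | h
      · simp [Nat.descFactorial_eq_zero_iff_lt.mpr h]
      · simp [zero_pow (Nat.sub_ne_zero_of_lt h)]
    · intro h
      exact absurd (Finset.mem_range.mpr hi) h
  -- vanishing of derivatives of T α * Q α - 1
  have hvanish : ∀ α, ∀ k < r α, (derivative^[k] (T α * Q α - 1)).eval (-(a α)) = 0 := by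
    intro α k hk
    have h1 : (derivative^[k] (T α * Q α - 1)).eval (-(a α))
        = iteratedDeriv k (fun y => (T α * Q α - 1).eval y) (-(a α)) := by
      rw [poly_iteratedDeriv]
    rw [h1]
    have hev : (fun y => (T α * Q α - 1).eval y) =ᶠ[𝓝 (-(a α))]
        fun y => ((T α).eval y - g α y) * (Q α).eval y := by
      filter_upwards [(hUopen α).mem_nhds (hUmem α)] with y hy
      have := hgQ α y hy
      simp only [Polynomial.eval_sub, Polynomial.eval_mul, Polynomial.eval_one]
      nlinarith [this]
    rw [hev.iteratedDeriv_eq k]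
    apply iteratedDeriv_mul_eq_zero k _ _ (U α) _ (hUopen α) (hUmem α)
      (((contDiff_eval (T α)).contDiffOn).sub (hgsmooth α))
      ((contDiff_eval (Q α)).contDiffOn)
    intro i hi
    have hiu : iteratedDeriv i (fun y => (T α).eval y - g α y) (-(a α))
        = iteratedDeriv i (fun y => (T α).eval y) (-(a α))
          - iteratedDeriv i (g α) (-(a α)) := by
      rw [← iteratedDeriv_of_isOpen i (hUopen α) (hUmem α),
        ← iteratedDeriv_of_isOpen i (hUopen α) (hUmem α),
        ← iteratedDeriv_of_isOpen i (hUopen α) (hUmem α)]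
      exact iteratedDerivWithin_sub (hUmem α) (hUopen α).uniqueDiffOn
        (((contDiff_eval (T α)).contDiffOn.contDiffWithinAt (hUmem α)).of_le (mod_cast le_top))
          (((hgsmooth α).contDiffWithinAt (hUmem α)).of_le (mod_cast le_top))
    rw [hiu, poly_iteratedDeriv]
    beta_reduce
    rw [hTeval α i (lt_of_le_of_lt hi hk)]
    have hfac : (i.factorial : ℝ) ≠ 0 := Nat.cast_ne_zero.mpr i.factorial_ne_zero
    rw [hc]
    field_simp
    ring
  -- divisibility
  have hdvd : ∀ α, (X + C (a α)) ^ r α ∣ (T α * Q α - 1) := by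
    intro α
    by_cases hD : T α * Q α - 1 = 0
    · rw [hD]; exact dvd_zero _
    have hlt : r α - 1 < (T α * Q α - 1).rootMultiplicity (-(a α)) := by
      apply Polynomial.lt_rootMultiplicity_of_isRoot_iterate_derivative_of_mem_nonZeroDivisors hD
      · intro m hm
        exact hvanish α m (lt_of_le_of_lt hm (Nat.sub_lt (hr α) one_pos))
      · exact mem_nonZeroDivisors_of_ne_zero
          (Nat.cast_ne_zero.mpr (r α - 1).factorial_ne_zero)
    have hle : r α ≤ (T α * Q α - 1).rootMultiplicity (-(a α)) := by
      omega
    have h1 : (X - C (-(a α))) ^ r α ∣ (T α * Q α - 1) :=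
      (pow_dvd_pow _ hle).trans (Polynomial.pow_rootMultiplicity_dvd _ _)
    simpa [sub_neg_eq_add, map_neg] using h1
  -- the main polynomial identity
  have hmain : ∑ α, T α * Q α = 1 := by
    set D : ℝ[X] := (∑ α, T α * Q α) - 1 with hD
    have hdvdD : ∀ α, (X + C (a α)) ^ r α ∣ D := by
      intro α
      have hsplit : D = (T α * Q α - 1) + ∑ β ∈ Finset.univ.erase α, T β * Q β := by
        rw [hD, ← Finset.add_sum_erase _ _ (Finset.mem_univ α)]
        ring
      rw [hsplit]
      apply dvd_add (hdvd α)
      apply Finset.dvd_sum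
      intro β hβ
      have hαβ : α ∈ Finset.univ.erase β :=
        Finset.mem_erase.mpr ⟨fun h => (Finset.mem_erase.mp hβ).1 h.symm, Finset.mem_univ _⟩
      exact Dvd.dvd.mul_left (Finset.dvd_prod_of_mem _ hαβ) _
    have hP : (∏ α, (X + C (a α)) ^ r α : ℝ[X]) ∣ D := by
      apply Finset.prod_dvd_of_coprime
      · intro α _ β _ hαβ
        have := Polynomial.pairwise_coprime_X_sub_C
          (K := ℝ) (s := fun γ : Fin R => -(a γ))
          (fun γ δ h => ha (by linarith [neg_injective h])) hαβ
        simpa [sub_neg_eq_add, map_neg] using this.pow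
      · intro α _
        exact hdvdD α
    -- degree considerations
    set N : ℕ := ∑ α, r α with hN
    have hmonic : ∀ α, ((X + C (a α)) ^ r α : ℝ[X]).Monic :=
      fun α => (Polynomial.monic_X_add_C _).pow _
    have hPdeg : (∏ α, (X + C (a α)) ^ r α : ℝ[X]).degree = (N : WithBot ℕ) := by
      rw [Polynomial.degree_prod]
      rw [hN, Nat.cast_sum]
      congr 1
      funext α
      rw [Polynomial.degree_pow, Polynomial.degree_X_add_C]
      simp
    have hQdeg : ∀ α, (Q α).degree = ((∑ β ∈ Finset.univ.erase α, r β : ℕ) : WithBot ℕ) := by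
      intro α
      rw [hQ]
      rw [Polynomial.degree_prod, Nat.cast_sum]
      congr 1
      funext β
      rw [Polynomial.degree_pow, Polynomial.degree_X_add_C]
      simp
    have hTdeg : ∀ α, (T α).degree < ((r α : ℕ) : WithBot ℕ) := by
      intro α
      rw [hT]
      apply lt_of_le_of_lt (Polynomial.degree_sum_le _ _)
      rw [Finset.sup_lt_iff (by exact_mod_cast WithBot.bot_lt_coe (r α))]
      intro k hk
      apply lt_of_le_of_lt (Polynomial.degree_mul_le _ _)
      have h2 : ((X + C (a α)) ^ k : ℝ[X]).degree = (k : WithBot ℕ) := by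
        rw [Polynomial.degree_pow, Polynomial.degree_X_add_C]
        simp
      calc (C (c α k)).degree + ((X + C (a α)) ^ k : ℝ[X]).degree
          ≤ 0 + (k : WithBot ℕ) := add_le_add Polynomial.degree_C_le h2.le
        _ = (k : WithBot ℕ) := zero_add _
        _ < ((r α : ℕ) : WithBot ℕ) := by exact_mod_cast Finset.mem_range.mp hk
    have hDdeg : D.degree < (N : WithBot ℕ) := by
      have hsum : (∑ α, T α * Q α : ℝ[X]).degree < (N : WithBot ℕ) := by
        apply lt_of_le_of_lt (Polynomial.degree_sum_le _ _)
        rw [Finset.sup_lt_iff (by exact_mod_cast WithBot.bot_lt_coe N)]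
        intro α _
        apply lt_of_le_of_lt (Polynomial.degree_mul_le _ _)
        have hNsplit : r α + ∑ β ∈ Finset.univ.erase α, r β = N := by
          rw [hN, Finset.add_sum_erase _ _ (Finset.mem_univ α)]
        calc (T α).degree + (Q α).degree
            < ((r α : ℕ) : WithBot ℕ) + ((∑ β ∈ Finset.univ.erase α, r β : ℕ) : WithBot ℕ) := by
              rw [hQdeg α]
              exact WithBot.add_lt_add_right (by exact_mod_cast WithBot.coe_ne_bot) (hTdeg α)
          _ = (N : WithBot ℕ) := by
              rw [← Nat.cast_add, hNsplit]
      have hone : (1 : ℝ[X]).degree ≤ 0 := Polynomial.degree_one_le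
      have hNpos : (0 : WithBot ℕ) < (N : WithBot ℕ) := by
        have : 0 < N := by
          rw [hN]
          have : Nonempty (Fin R) := Fin.pos_iff_nonempty.mp hR
          obtain ⟨α⟩ := this
          exact Finset.sum_pos' (fun β _ => Nat.zero_le _) ⟨α, Finset.mem_univ α, hr α⟩
        exact_mod_cast this
      rw [hD]
      apply lt_of_le_of_lt (Polynomial.degree_sub_le _ _)
      exact max_lt hsum (lt_of_le_of_lt hone hNpos)
    have hD0 : D = 0 := Polynomial.eq_zero_of_dvd_of_degree_lt hP (by rw [hPdeg]; exact hDdeg)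
    have := sub_eq_zero.mp hD0
    exact this
  -- evaluate at x
  have hxq : ∀ α, (x + a α) ^ r α ≠ 0 := fun α => pow_ne_zero _ (hx α)
  have heval : ∑ α, (T α).eval x * (Q α).eval x = 1 := by
    have := congrArg (Polynomial.eval x) hmain
    simpa [Polynomial.eval_finset_sum] using this
  have hstep : ∀ α, ((x + a α) ^ r α)⁻¹ = (Q α).eval x * (∏ β, (x + a β) ^ r β)⁻¹ := by
    intro α
    rw [hQeval, ← Finset.mul_prod_erase _ _ (Finset.mem_univ α)]
    rw [mul_inv]
    rw [← mul_assoc, mul_comm ((∏ β ∈ Finset.univ.erase α, (x + a β) ^ r β))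
      (((x + a α) ^ r α)⁻¹), mul_assoc]
    rw [mul_inv_cancel₀ (Finset.prod_ne_zero_iff.mpr fun β _ => hxq β), mul_one]
  have hmid : ∏ α, ((x + a α) ^ r α)⁻¹ = ∑ α, (T α).eval x * ((x + a α) ^ r α)⁻¹ := by
    rw [show (∏ α, ((x + a α) ^ r α)⁻¹ : ℝ) = (∏ α, (x + a α) ^ r α)⁻¹ from
      Finset.prod_inv_distrib _]
    calc (∏ α, (x + a α) ^ r α)⁻¹ = (∑ α, (T α).eval x * (Q α).eval x)
        * (∏ α, (x + a α) ^ r α)⁻¹ := by rw [heval, one_mul]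
      _ = ∑ α, (T α).eval x * ((x + a α) ^ r α)⁻¹ := by
          rw [Finset.sum_mul]
          exact Finset.sum_congr rfl fun α _ => by rw [hstep α, mul_assoc]
  rw [hmid]
  apply Finset.sum_congr rfl
  intro α _
  -- expand T α and reindex
  have hTx : (T α).eval x = ∑ k ∈ range (r α), c α k * (x + a α) ^ k := by
    rw [hT]
    simp [Polynomial.eval_finset_sum]
  rw [hTx, Finset.sum_mul]
  apply Finset.sum_nbij' (i := fun k => r α - k) (j := fun ℓ => r α - ℓ)
  · intro k hk
    simp only [Finset.mem_Icc, Finset.mem_range] at *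
    omega
  · intro ℓ hℓ
    simp only [Finset.mem_Icc, Finset.mem_range] at *
    omega
  · intro k hk
    simp only [Finset.mem_range] at hk
    omega
  · intro ℓ hℓ
    simp only [Finset.mem_Icc] at hℓ
    omega
  · intro k hk
    simp only [Finset.mem_range] at hk
    have h1 : r α - (r α - k) = k := by omega
    show c α k * (x + a α) ^ k * ((x + a α) ^ r α)⁻¹
        = c α (r α - (r α - k)) * ((x + a α) ^ (r α - k))⁻¹
    rw [h1]
    have h4 : (x + a α) ^ k ≠ 0 := pow_ne_zero _ (hx α)
    have h3 : (x + a α) ^ r α = (x + a α) ^ k * (x + a α) ^ (r α - k) := by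
      rw [← pow_add]; congr 1; omega
    calc c α k * (x + a α) ^ k * ((x + a α) ^ r α)⁻¹
        = c α k * ((x + a α) ^ (r α - k))⁻¹ * ((x + a α) ^ k * ((x + a α) ^ k)⁻¹) := by
          rw [h3, mul_inv]; ring
      _ = c α k * ((x + a α) ^ (r α - k))⁻¹ := by rw [mul_inv_cancel₀ h4, mul_one]

end PFAux


open MeasureTheory Real Set Filter Topology Finset Complex

namespace PFAux

lemma prod_Icc_one_eq {M : Type*} [CommMonoid M] (m : ℕ) (f : ℕ → M) :
    ∏ p ∈ Finset.Icc 1 m, f p = ∏ j ∈ Finset.range m, f (m - j) := by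
  apply Finset.prod_nbij' (i := fun p => m - p) (j := fun j => m - j)
  · intro p hp; simp only [Finset.mem_Icc, Finset.mem_range] at *; omega
  · intro j hj; simp only [Finset.mem_Icc, Finset.mem_range] at *; omega
  · intro p hp; simp only [Finset.mem_Icc] at hp; omega
  · intro j hj; simp only [Finset.mem_range] at hj; omega
  · intro p hp
    simp only [Finset.mem_Icc] at hp
    congr 1
    omega

/-- the beta integral as an integral over `Ioi 0`. -/
lemma beta_Ioi (a b : ℂ) (ha : 0 < a.re) (hb : 0 < b.re) :
    IntegrableOn (fun t : ℝ => (t : ℂ) ^ (a - 1) * ((1 + t : ℝ) : ℂ) ^ (-(a + b))) (Ioi 0)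
      ∧ ∫ t in Ioi (0 : ℝ), (t : ℂ) ^ (a - 1) * ((1 + t : ℝ) : ℂ) ^ (-(a + b))
        = Complex.betaIntegral a b := by
  set g : ℝ → ℂ := fun x => (x : ℂ) ^ (a - 1) * (1 - (x : ℂ)) ^ (b - 1) with hg
  set f : ℝ → ℝ := fun t => t / (1 + t) with hf
  set f' : ℝ → ℝ := fun t => ((1 + t) ^ 2)⁻¹ with hf'
  have himg : f '' Ioi 0 = Set.Ioo (0:ℝ) 1 := by
    ext y
    constructor
    · rintro ⟨t, ht, rfl⟩
      have ht : (0:ℝ) < t := ht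
      have h1t : (0:ℝ) < 1 + t := by linarith
      constructor
      · positivity
      · rw [div_lt_one h1t]; linarith
    · rintro ⟨hy0, hy1⟩
      refine ⟨y / (1 - y), ?_, ?_⟩
      · have : (0:ℝ) < 1 - y := by linarith
        exact div_pos hy0 this
      · have h1y : (1:ℝ) - y ≠ 0 := by linarith
        rw [hf]
        field_simp
        ring
  have hderiv : ∀ t ∈ Ioi (0:ℝ), HasDerivWithinAt f (f' t) (Ioi 0) t := by
    intro t ht
    have h1t : (1:ℝ) + t ≠ 0 := by
      have : (0:ℝ) < t := ht
      positivity
    have h := ((hasDerivAt_id t).div ((hasDerivAt_id t).const_add 1) h1t)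
    refine h.hasDerivWithinAt.congr_deriv ?_
    rw [hf']
    simp only [id]
    rw [one_mul, mul_one, add_sub_cancel_right, one_div]
  have hinj : InjOn f (Ioi 0) := by
    intro p hp q hq h
    have hp' : (0:ℝ) < p := hp
    have hq' : (0:ℝ) < q := hq
    have h1p : (1:ℝ) + p ≠ 0 := by positivity
    have h1q : (1:ℝ) + q ≠ 0 := by positivity
    rw [hf, div_eq_div_iff h1p h1q] at h
    nlinarith [h]
  have hpoint : ∀ t ∈ Ioi (0:ℝ), |f' t| • g (f t)
      = (t : ℂ) ^ (a - 1) * ((1 + t : ℝ) : ℂ) ^ (-(a + b)) := by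
    intro t ht
    have ht' : (0:ℝ) < t := ht
    have hu : (0:ℝ) < 1 + t := by linarith
    have huC : ((1 + t : ℝ) : ℂ) ≠ 0 := Complex.ofReal_ne_zero.mpr hu.ne'
    have harg : ((1 + t : ℝ) : ℂ).arg ≠ π := by
      rw [Complex.arg_ofReal_of_nonneg hu.le]
      exact (Real.pi_ne_zero).symm
    have h1f : (1 : ℂ) - ((f t : ℝ) : ℂ) = ((1 + t : ℝ) : ℂ)⁻¹ := by
      rw [hf]
      rw [show (1:ℂ) - ((t / (1 + t) : ℝ) : ℂ) = (((1 - t / (1+t)) : ℝ) : ℂ) by push_cast; ring]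
      rw [← Complex.ofReal_inv, one_sub_div hu.ne', add_sub_cancel_right, one_div]
    have hft : ((f t : ℝ) : ℂ) = (t : ℂ) * ((1 + t : ℝ) : ℂ)⁻¹ := by
      rw [hf]; push_cast; field_simp
    have hsplit : ((f t : ℝ) : ℂ) ^ (a - 1)
        = (t : ℂ) ^ (a - 1) * (((1 + t : ℝ) : ℂ) ^ (a - 1))⁻¹ := by
      rw [hf, show ((t / (1 + t) : ℝ) : ℂ) ^ (a-1) = (((t * (1+t)⁻¹ : ℝ)) : ℂ) ^ (a-1) by
        rw [div_eq_mul_inv]]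
      rw [Complex.ofReal_mul, Complex.mul_cpow_ofReal_nonneg ht'.le (inv_nonneg.mpr hu.le)]
      congr 1
      rw [Complex.ofReal_inv, Complex.inv_cpow _ _ harg]
    have h2 : ((1 : ℂ) - ((f t : ℝ) : ℂ)) ^ (b - 1) = (((1 + t : ℝ) : ℂ) ^ (b - 1))⁻¹ := by
      rw [h1f, Complex.inv_cpow _ _ harg]
    have habs : |f' t| = ((1 + t)^2)⁻¹ := by
      rw [hf', abs_of_pos]
      positivity
    rw [hg, habs]
    simp only [Complex.real_smul]
    rw [hsplit, h2]
    have hcpow : ((1 + t : ℝ) : ℂ) ^ (-(a + b))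
        = (((1 + t : ℝ) : ℂ) ^ (a - 1))⁻¹ * (((1 + t : ℝ) : ℂ) ^ (b - 1))⁻¹
          * ((((1 + t : ℝ) : ℂ) ^ (2:ℕ)))⁻¹ := by
      rw [← mul_inv, ← mul_inv, ← Complex.cpow_natCast, ← Complex.cpow_add _ _ huC,
        ← Complex.cpow_add _ _ huC, ← Complex.cpow_neg]
      congr 1
      push_cast
      ring
    rw [hcpow]
    rw [Complex.ofReal_inv, Complex.ofReal_pow]
    ring
  have hbc := Complex.betaIntegral_convergent ha hb
  have hIoo : IntegrableOn g (Set.Ioo (0:ℝ) 1) := by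
    have := (intervalIntegrable_iff_integrableOn_Ioc_of_le zero_le_one).mp hbc
    exact this.mono_set Ioo_subset_Ioc_self
  have hkey := integral_image_eq_integral_abs_deriv_smul measurableSet_Ioi hderiv hinj g
  have hkeyInt := integrableOn_image_iff_integrableOn_abs_deriv_smul
    measurableSet_Ioi hderiv hinj g
  rw [himg] at hkey hkeyInt
  constructor
  · exact (hkeyInt.mp hIoo).congr_fun hpoint measurableSet_Ioi
  · rw [← setIntegral_congr_fun measurableSet_Ioi hpoint, ← hkey,
      Complex.betaIntegral, intervalIntegral.integral_of_le zero_le_one,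
      integral_Ioc_eq_integral_Ioo]

lemma sin_pi_s_ne_zero {s : ℂ} (hs₁ : -1 < s.re) (hs₂ : s.re < 0) :
    Complex.sin ((π : ℂ) * s) ≠ 0 := by
  intro h
  rw [Complex.sin_eq_zero_iff] at h
  obtain ⟨k, hk⟩ := h
  have hπ : ((π : ℝ) : ℂ) ≠ 0 := Complex.ofReal_ne_zero.mpr Real.pi_ne_zero
  have hs : s = (k : ℂ) := by
    have h2 : ((π : ℝ) : ℂ) * s = ((π : ℝ) : ℂ) * (k : ℂ) := by rw [hk]; ring
    exact mul_left_cancel₀ hπ h2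
  rw [hs] at hs₁ hs₂
  simp only [Complex.intCast_re] at hs₁ hs₂
  have h1 : (-1 : ℝ) < (k : ℝ) := hs₁
  have h2 : ((k : ℝ)) < 0 := hs₂
  have : (-1 : ℤ) < k := by exact_mod_cast h1
  have : k < 0 := by exact_mod_cast h2
  omega

lemma gamma_shift (s : ℂ) (hs₁ : -1 < s.re) : ∀ m : ℕ,
    Complex.Gamma (s + 1 + m) = (∏ j ∈ Finset.range m, (s + 1 + j)) * Complex.Gamma (s + 1) := by
  intro m
  induction m with
  | zero => simp
  | succ m IH =>
    have hne : s + 1 + m ≠ 0 := by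
      intro h
      have := congrArg Complex.re h
      simp only [Complex.add_re, Complex.one_re, Complex.natCast_re, Complex.zero_re] at this
      have : s.re + 1 + m = 0 := this
      have hm : (0:ℝ) ≤ m := Nat.cast_nonneg m
      linarith
    have : s + 1 + (m + 1 : ℕ) = (s + 1 + m) + 1 := by push_cast; ring
    rw [this, Complex.Gamma_add_one _ hne, IH, Finset.prod_range_succ]
    ring

lemma gamma_arith {s : ℂ} (hs₁ : -1 < s.re) (hs₂ : s.re < 0) (ℓ : ℕ) (hℓ : 1 ≤ ℓ) :
    -(Complex.sin ((π : ℂ) * s) / (π : ℂ)) * Complex.betaIntegral (-s) (s + ℓ)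
      = ∏ p ∈ Finset.Icc 1 (ℓ - 1), (s + (ℓ : ℂ) - (p : ℂ)) / ((ℓ : ℂ) - (p : ℂ)) := by
  have hπ : ((π : ℝ) : ℂ) ≠ 0 := Complex.ofReal_ne_zero.mpr Real.pi_ne_zero
  have hsin := sin_pi_s_ne_zero hs₁ hs₂
  have hbeta : Complex.Gamma (-s) * Complex.Gamma (s + ℓ)
      = Complex.Gamma ((ℓ - 1 : ℕ) + 1) * Complex.betaIntegral (-s) (s + ℓ) := by
    have h1 : 0 < (-s).re := by simp; linarith
    have h2 : 0 < (s + ℓ).re := by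
      simp only [Complex.add_re, Complex.natCast_re]
      have : (1:ℝ) ≤ ℓ := by exact_mod_cast hℓ
      linarith
    have := Complex.Gamma_mul_Gamma_eq_betaIntegral h1 h2
    rw [this]
    congr 2
    push_cast [Nat.cast_sub hℓ]
    ring
  rw [Complex.Gamma_nat_eq_factorial (ℓ - 1)] at hbeta
  -- Gamma (s + ℓ) in terms of Gamma (s+1)
  have hshift : Complex.Gamma (s + ℓ)
      = (∏ j ∈ Finset.range (ℓ - 1), (s + 1 + j)) * Complex.Gamma (s + 1) := by
    have h := gamma_shift s hs₁ (ℓ - 1)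
    rw [show s + 1 + ((ℓ - 1 : ℕ) : ℂ) = s + ℓ by push_cast [Nat.cast_sub hℓ]; ring] at h
    exact h
  -- reflection
  have hrefl : Complex.Gamma (-s) * Complex.Gamma (s + 1)
      = -((π : ℂ) / Complex.sin ((π : ℂ) * s)) := by
    have h := Complex.Gamma_mul_Gamma_one_sub (-s)
    rw [show (1 : ℂ) - -s = s + 1 by ring] at h
    rw [h, show (π : ℂ) * -s = -((π:ℂ) * s) by ring, Complex.sin_neg]
    rw [div_neg]
  -- numerator product
  have hnum : ∏ p ∈ Finset.Icc 1 (ℓ - 1), (s + (ℓ : ℂ) - (p : ℂ))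
      = ∏ j ∈ Finset.range (ℓ - 1), (s + 1 + j) := by
    rw [prod_Icc_one_eq]
    apply Finset.prod_congr rfl
    intro j hj
    have hj' : j < ℓ - 1 := Finset.mem_range.mp hj
    have : ((ℓ - 1 - j : ℕ) : ℂ) = (ℓ : ℂ) - 1 - j := by
      push_cast [Nat.cast_sub (by omega : j ≤ ℓ - 1), Nat.cast_sub hℓ]
      ring
    rw [this]
    ring
  have hden : ∏ p ∈ Finset.Icc 1 (ℓ - 1), ((ℓ : ℂ) - (p : ℂ))
      = ((ℓ - 1).factorial : ℂ) := by
    rw [prod_Icc_one_eq]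
    have : ∀ j ∈ Finset.range (ℓ - 1), (ℓ : ℂ) - ((ℓ - 1 - j : ℕ) : ℂ) = ((j + 1 : ℕ) : ℂ) := by
      intro j hj
      have hj' : j < ℓ - 1 := Finset.mem_range.mp hj
      push_cast [Nat.cast_sub (by omega : j ≤ ℓ - 1), Nat.cast_sub hℓ]
      ring
    rw [Finset.prod_congr rfl this, ← Nat.cast_prod, Finset.prod_range_add_one_eq_factorial]
  have hfac : (((ℓ - 1).factorial : ℂ)) ≠ 0 :=
    Nat.cast_ne_zero.mpr (ℓ - 1).factorial_ne_zero
  -- put everything together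
  have hbeta' : Complex.betaIntegral (-s) (s + ℓ)
      = Complex.Gamma (-s) * Complex.Gamma (s + ℓ) / ((ℓ - 1).factorial : ℂ) := by
    field_simp [hbeta]
    rw [hbeta]; ring
  rw [hbeta', hshift]
  rw [Finset.prod_div_distrib, hnum, hden]
  rw [show Complex.Gamma (-s) * ((∏ j ∈ Finset.range (ℓ - 1), (s + 1 + j))
      * Complex.Gamma (s + 1))
    = (Complex.Gamma (-s) * Complex.Gamma (s + 1)) * ∏ j ∈ Finset.range (ℓ - 1), (s + 1 + j)
    by ring, hrefl]
  field_simp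

end PFAux


open MeasureTheory Real Set Filter Topology Finset Complex

namespace PFAux

lemma scaled {s : ℂ} (hs₁ : -1 < s.re) (hs₂ : s.re < 0) (c : ℝ) (hc : 0 < c)
    (ℓ : ℕ) (hℓ : 1 ≤ ℓ) :
    IntegrableOn (fun w : ℝ => (w : ℂ) ^ (-s - 1) * (((w : ℂ) + (c : ℂ)) ^ ℓ)⁻¹) (Ioi 0)
      ∧ ∫ w in Ioi (0 : ℝ), (w : ℂ) ^ (-s - 1) * (((w : ℂ) + (c : ℂ)) ^ ℓ)⁻¹
        = (c : ℂ) ^ (-(s + ℓ)) * Complex.betaIntegral (-s) (s + ℓ) := by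
  have ha : 0 < (-s).re := by simp; linarith
  have hb : 0 < (s + ℓ).re := by
    simp only [Complex.add_re, Complex.natCast_re]
    have : (1:ℝ) ≤ ℓ := by exact_mod_cast hℓ
    linarith
  obtain ⟨hBint, hBval⟩ := beta_Ioi (-s) (s + ℓ) ha hb
  set G : ℝ → ℂ := fun w => (w : ℂ) ^ (-s - 1) * (((w : ℂ) + (c : ℂ)) ^ ℓ)⁻¹ with hG
  set B : ℝ → ℂ := fun t => (t : ℂ) ^ (-s - 1) * ((1 + t : ℝ) : ℂ) ^ (-(-s + (s + ℓ))) with hB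
  have hBint' : IntegrableOn B (Ioi 0) := by
    have : (fun t : ℝ => (t : ℂ) ^ (-s - 1) * ((1 + t : ℝ) : ℂ) ^ (-(-s + (s + ℓ)))) =
        fun t : ℝ => (t : ℂ) ^ (-s - 1) * ((1 + t : ℝ) : ℂ) ^ (-(-s + (s + ℓ))) := rfl
    exact hBint
  have hcC : (c : ℂ) ≠ 0 := Complex.ofReal_ne_zero.mpr hc.ne'
  set K : ℂ := (c : ℂ) ^ (-(s + ℓ)) with hK
  have hKval : (c : ℂ) * ((c : ℂ) ^ (-s - 1) * ((c : ℂ) ^ (ℓ:ℕ))⁻¹) = K := by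
    rw [hK, ← Complex.cpow_natCast, ← Complex.cpow_neg]
    nth_rewrite 1 [show (c : ℂ) = (c : ℂ) ^ (1 : ℂ) from (Complex.cpow_one _).symm]
    rw [← Complex.cpow_add _ _ hcC, ← Complex.cpow_add _ _ hcC]
    congr 1
    ring
  -- change of variables w = c * t
  set f : ℝ → ℝ := fun t => c * t with hf
  have himg : f '' Ioi 0 = Set.Ioi (0:ℝ) := by
    ext y
    constructor
    · rintro ⟨t, ht, rfl⟩
      exact mul_pos hc ht
    · intro hy
      exact ⟨y / c, div_pos hy hc, by rw [hf]; field_simp⟩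
  have hderiv : ∀ t ∈ Ioi (0:ℝ), HasDerivWithinAt f c (Ioi 0) t := by
    intro t _
    simpa using ((hasDerivAt_id t).const_mul c).hasDerivWithinAt
  have hinj : InjOn f (Ioi 0) := fun p _ q _ h => mul_left_cancel₀ hc.ne' h
  have hpoint : ∀ t ∈ Ioi (0:ℝ), |c| • G (f t) = K * B t := by
    intro t ht
    rw [abs_of_pos hc]
    have ht' : (0:ℝ) < t := ht
    have h1t : (0:ℝ) < 1 + t := by linarith
    have hA1 : ((c * t : ℝ) : ℂ) ^ (-s - 1) = (c : ℂ) ^ (-s - 1) * (t : ℂ) ^ (-s - 1) := by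
      rw [Complex.ofReal_mul, Complex.mul_cpow_ofReal_nonneg hc.le ht'.le]
    have hA2 : ((c * t : ℝ) : ℂ) + (c : ℂ) = (c : ℂ) * ((1 + t : ℝ) : ℂ) := by
      push_cast
      ring
    have hA4 : (((1 + t : ℝ) : ℂ) ^ (ℓ:ℕ))⁻¹ = ((1 + t : ℝ) : ℂ) ^ (-(-s + (s + ℓ))) := by
      rw [show -(-s + (s + ℓ)) = -(ℓ:ℂ) by ring, Complex.cpow_neg, Complex.cpow_natCast]
    rw [hG]
    simp only
    rw [hA1, hA2, mul_pow, mul_inv]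
    rw [Complex.real_smul]
    rw [hB]
    simp only
    rw [← hA4, ← hKval]
    ring
  have hkey := integral_image_eq_integral_abs_deriv_smul measurableSet_Ioi hderiv hinj G
  have hkeyInt := integrableOn_image_iff_integrableOn_abs_deriv_smul
    measurableSet_Ioi hderiv hinj G
  rw [himg] at hkey hkeyInt
  constructor
  · rw [hkeyInt]
    exact (IntegrableOn.congr_fun ((hBint'.const_mul K)) (fun t ht => (hpoint t ht).symm)
      measurableSet_Ioi)
  · calc ∫ w in Ioi (0:ℝ), G w = ∫ t in Ioi (0:ℝ), |c| • G (f t) := hkey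
      _ = ∫ t in Ioi (0:ℝ), K * B t := setIntegral_congr_fun measurableSet_Ioi hpoint
      _ = K * ∫ t in Ioi (0:ℝ), B t := by rw [integral_const_mul]
      _ = K * Complex.betaIntegral (-s) (s + ℓ) := by rw [hB]; rw [hBval]

end PFAux

open PFAux in
/-- For pairwise distinct positive integers `n₁, …, n_R`, positive integers
`r₁, …, r_R`, and `s ∈ ℂ` with `-1 < Re s < 0`,
`-(sin(πs)/π) ∫₀^∞ w^(-s-1) ∏_α (w+n_α)^(-r_α) dw
  = ∑_α ∑_{ℓ=1}^{r_α} n_α^(-(s+ℓ)) (∏_{p=1}^{ℓ-1} (s+ℓ-p)/(ℓ-p)) A_α^{(ℓ)}`,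
where `A_α^{(ℓ)} = (1/(r_α-ℓ)!) (d^{r_α-ℓ}/dw^{r_α-ℓ})[∏_{β≠α}(w+n_β)^(-r_β)]` at `w=-n_α`. -/
theorem integral_partial_fraction (R : ℕ) (n : Fin R → ℕ)
    (hn : Function.Injective n) (hnpos : ∀ α, 0 < n α)
    (r : Fin R → ℕ) (hr : ∀ α, 0 < r α) (s : ℂ)
    (hs₁ : -1 < s.re) (hs₂ : s.re < 0) :
    -(Complex.sin ((Real.pi : ℂ) * s) / (Real.pi : ℂ)) *
        ∫ w in Set.Ioi (0 : ℝ),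
          (w : ℂ) ^ (-s - 1) * ∏ α, (((w : ℂ) + (n α : ℂ)) ^ r α)⁻¹
      = ∑ α, ∑ ℓ ∈ Finset.Icc 1 (r α),
          (n α : ℂ) ^ (-(s + (ℓ : ℂ))) *
            (∏ p ∈ Finset.Icc 1 (ℓ - 1), (s + (ℓ : ℂ) - (p : ℂ)) / ((ℓ : ℂ) - (p : ℂ))) *
            (((1 / (Nat.factorial (r α - ℓ) : ℝ)) *
              iteratedDeriv (r α - ℓ)
                (fun x : ℝ => ∏ β ∈ Finset.univ.erase α, ((x + (n β : ℝ)) ^ r β)⁻¹)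
                (-(n α : ℝ)) : ℝ) : ℂ) := by
  by_cases hR : R = 0
  · subst hR
    simp only [Finset.univ_eq_empty, Finset.prod_empty, mul_one, Finset.sum_empty]
    have hne : ¬ Integrable (fun w : ℝ => (w : ℂ) ^ (-s - 1)) (volume.restrict (Set.Ioi 0)) := by
      intro h
      have h1 : IntegrableOn (fun w : ℝ => (w : ℂ) ^ (-s - 1)) (Set.Ioi 1) :=
        MeasureTheory.IntegrableOn.mono_set h (Set.Ioi_subset_Ioi zero_le_one)
      rw [integrableOn_Ioi_cpow_iff zero_lt_one] at h1
      simp only [Complex.sub_re, Complex.neg_re, Complex.one_re] at h1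
      linarith
    rw [MeasureTheory.integral_undef hne, mul_zero]
  · have hR' : 0 < R := Nat.pos_of_ne_zero hR
    have hainj : Function.Injective (fun α : Fin R => (n α : ℝ)) := fun α β h =>
      hn (Nat.cast_injective h)
    have hnposR : ∀ α, (0:ℝ) < (n α : ℝ) := fun α => by exact_mod_cast hnpos α
    set A : Fin R → ℕ → ℝ := fun α ℓ => (1 / (Nat.factorial (r α - ℓ) : ℝ)) *
      iteratedDeriv (r α - ℓ)
        (fun x : ℝ => ∏ β ∈ Finset.univ.erase α, ((x + (n β : ℝ)) ^ r β)⁻¹)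
        (-(n α : ℝ)) with hA
    have hpt : ∀ w ∈ Set.Ioi (0:ℝ),
        (w : ℂ) ^ (-s - 1) * ∏ α, (((w : ℂ) + (n α : ℂ)) ^ r α)⁻¹
          = ∑ α, ∑ ℓ ∈ Finset.Icc 1 (r α),
              (A α ℓ : ℂ) * ((w : ℂ) ^ (-s - 1) * (((w : ℂ) + (n α : ℂ)) ^ ℓ)⁻¹) := by
      intro w hw
      have hw' : (0:ℝ) < w := hw
      have hx : ∀ α, w + ((fun α : Fin R => (n α : ℝ)) α) ≠ 0 := fun α =>
        (add_pos_of_pos_of_nonneg hw' (Nat.cast_nonneg _)).ne'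
      have hpf := partial_fractions hR' (fun α => (n α : ℝ)) hainj r hr hx
      have hcast : ((∏ α, ((w + (n α : ℝ)) ^ r α)⁻¹ : ℝ) : ℂ)
          = ∏ α, (((w : ℂ) + (n α : ℂ)) ^ r α)⁻¹ := by
        push_cast
        rfl
      have hcast2 : ((∑ α, ∑ ℓ ∈ Finset.Icc 1 (r α), A α ℓ * ((w + (n α : ℝ)) ^ ℓ)⁻¹ : ℝ) : ℂ)
          = ∑ α, ∑ ℓ ∈ Finset.Icc 1 (r α), (A α ℓ : ℂ) * (((w : ℂ) + (n α : ℂ)) ^ ℓ)⁻¹ := by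
        push_cast
        rfl
      rw [← hcast, hpf, hcast2, Finset.mul_sum]
      refine Finset.sum_congr rfl fun α _ => ?_
      rw [Finset.mul_sum]
      exact Finset.sum_congr rfl fun ℓ _ => by ring
    have hint : ∀ α, ∀ ℓ ∈ Finset.Icc 1 (r α),
        IntegrableOn (fun w : ℝ => (w : ℂ) ^ (-s - 1) * (((w : ℂ) + (n α : ℂ)) ^ ℓ)⁻¹)
          (Set.Ioi 0) := by
      intro α ℓ hℓ
      have h := (scaled hs₁ hs₂ (n α : ℝ) (hnposR α) ℓ (Finset.mem_Icc.mp hℓ).1).1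
      rw [Complex.ofReal_natCast] at h
      exact h
    have hval : ∀ α, ∀ ℓ ∈ Finset.Icc 1 (r α),
        -(Complex.sin ((Real.pi : ℂ) * s) / (Real.pi : ℂ)) *
            ∫ w in Set.Ioi (0:ℝ), (w : ℂ) ^ (-s - 1) * (((w : ℂ) + (n α : ℂ)) ^ ℓ)⁻¹
          = (n α : ℂ) ^ (-(s + (ℓ:ℂ))) *
              ∏ p ∈ Finset.Icc 1 (ℓ - 1), (s + (ℓ : ℂ) - (p : ℂ)) / ((ℓ : ℂ) - (p : ℂ)) := by
      intro α ℓ hℓ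
      have hℓ1 : 1 ≤ ℓ := (Finset.mem_Icc.mp hℓ).1
      have h := (scaled hs₁ hs₂ (n α : ℝ) (hnposR α) ℓ hℓ1).2
      rw [Complex.ofReal_natCast] at h
      rw [h, show -(Complex.sin ((Real.pi : ℂ) * s) / (Real.pi : ℂ)) *
          ((n α : ℂ) ^ (-(s + (ℓ:ℂ))) * Complex.betaIntegral (-s) (s + ℓ))
        = (n α : ℂ) ^ (-(s + (ℓ:ℂ))) *
          (-(Complex.sin ((Real.pi : ℂ) * s) / (Real.pi : ℂ)) *
            Complex.betaIntegral (-s) (s + ℓ)) by ring,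
        gamma_arith hs₁ hs₂ ℓ hℓ1]
    rw [setIntegral_congr_fun measurableSet_Ioi hpt,
      integral_finset_sum _ (fun α _ => integrable_finset_sum _
        (fun ℓ hℓ => (hint α ℓ hℓ).const_mul _)), Finset.mul_sum]
    refine Finset.sum_congr rfl fun α _ => ?_
    rw [integral_finset_sum _ (fun ℓ hℓ => (hint α ℓ hℓ).const_mul _), Finset.mul_sum]
    refine Finset.sum_congr rfl fun ℓ hℓ => ?_
    rw [integral_const_mul, show -(Complex.sin ((Real.pi : ℂ) * s) / (Real.pi : ℂ)) *
        ((A α ℓ : ℂ) * ∫ w in Set.Ioi (0:ℝ),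
          (w : ℂ) ^ (-s - 1) * (((w : ℂ) + (n α : ℂ)) ^ ℓ)⁻¹)
      = (A α ℓ : ℂ) * (-(Complex.sin ((Real.pi : ℂ) * s) / (Real.pi : ℂ)) *
          ∫ w in Set.Ioi (0:ℝ),
            (w : ℂ) ^ (-s - 1) * (((w : ℂ) + (n α : ℂ)) ^ ℓ)⁻¹) by ring,
      hval α ℓ hℓ]
    rw [hA]
    ring
end

section
/- For every admissible index k = (k_1,…,k_r) and every s ∈ ℂ with Re(s) > −1, the series defining the Ohno function, I_k(s) = Σ_{i=1}^{r} Σ_{0<n_1<⋯<n_r} (∏_{j=1}^{r} n_j^(−k_j)) · n_i^(−s) · ∏_{j≠i} n_j/(n_j−n_i), converges absolutely. -/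
/-!
Fix `i` and substitute `m_i = n_i`, `m_j = n_j - n_i` for `j ≠ i`. This change of variables is
injective, so it suffices to dominate each term by `∏_j |m_j|^(-(1+ε))`, a product of convergent
`p`-series over `ℤ`. With `σ = Re s`, multiplying the term by `∏_j |m_j|` leaves
`n_i^(-σ) ∏_j n_j^(1-k_j)`, which is at most `n_i^(-σ) / n_last` because `k_last ≥ 2`. As `n_i`
and all `|m_j|` lie in `[1, n_last]`, choosing `(r+1) ε ≤ min (1+σ) 1` bounds this by
`n_last^(-(r+1) ε) ≤ ∏_j |m_j|^(-ε)`.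
-/

open Finset

theorem summable_fintype_prod_of_nonneg {ι : Type*} [Fintype ι] {κ : ι → Type*}
    {f : (j : ι) → κ j → ℝ} (hf0 : ∀ j x, 0 ≤ f j x) (hf : ∀ j, Summable (f j)) :
    Summable fun v : (j : ι) → κ j => ∏ j, f j (v j) := by
  classical
  refine summable_of_sum_le (c := ∏ j, ∑' x, f j x) (fun v => prod_nonneg fun j _ => hf0 j _)
    fun S => ?_
  calc ∑ v ∈ S, ∏ j, f j (v j)
      ≤ ∑ v ∈ Fintype.piFinset fun j => S.image (· j), ∏ j, f j (v j) :=
        sum_le_sum_of_subset_of_nonneg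
          (fun v hv => Fintype.mem_piFinset.2 fun j => mem_image_of_mem _ hv)
          fun v _ _ => prod_nonneg fun j _ => hf0 j _
    _ = ∏ j, ∑ x ∈ S.image (· j), f j x := (prod_univ_sum _ _).symm
    _ ≤ ∏ j, ∑' x, f j x :=
        prod_le_prod (fun j _ => sum_nonneg fun x _ => hf0 j x)
          fun j _ => (hf j).sum_le_tsum _ fun x _ => hf0 j x

def shiftAt {ι : Type*} [DecidableEq ι] (i : ι) (n : ι → ℤ) : ι → ℤ :=
  Function.update (fun j => n j - n i) i (n i)

theorem shiftAt_injective {ι : Type*} [DecidableEq ι] (i : ι) :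
    Function.Injective (shiftAt i) := by
  intro n n' h
  have hi : n i = n' i := by simpa [shiftAt] using congr_fun h i
  funext j
  by_cases hj : j = i
  · rw [hj, hi]
  · have := congr_fun h j
    simp only [shiftAt, Function.update_of_ne hj] at this
    omega

theorem norm_ohno_term {ι : Type*} [Fintype ι] [DecidableEq ι] (k n : ι → ℕ) (i : ι)
    (hn : 0 < n i) (s : ℂ) :
    ‖(∏ j, ((n j : ℂ) ^ k j)⁻¹) * (n i : ℂ) ^ (-s) *
        ∏ j ∈ univ.erase i, (n j : ℂ) / ((n j : ℂ) - (n i : ℂ))‖ =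
      (∏ j, ((n j : ℝ) ^ k j)⁻¹) * (n i : ℝ) ^ (-s.re) *
        ∏ j ∈ univ.erase i, (n j : ℝ) / |(n j : ℝ) - n i| := by
  have hsub : ∀ j, ‖(n j : ℂ) - (n i : ℂ)‖ = |(n j : ℝ) - n i| := fun j => by
    rw [← Real.norm_eq_abs, ← Complex.norm_real]; push_cast; rfl
  simp [norm_prod, Complex.norm_natCast_cpow_of_pos hn, hsub]

theorem inv_pow_mul_self_le {α : Type*} [Field α] [LinearOrder α] [IsStrictOrderedRing α]
    {x : α} (hx : 1 ≤ x) {m k : ℕ} (hk : m + 1 ≤ k) :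
    (x ^ k)⁻¹ * x ≤ (x ^ m)⁻¹ := by
  rw [inv_mul_le_iff₀ (by positivity), ← div_eq_mul_inv, le_div_iff₀ (by positivity), ← pow_succ']
  exact pow_le_pow_right₀ hx hk

theorem prod_inv_pow_mul_self_le {ι : Type*} [Fintype ι] {n k : ι → ℕ} {L : ι}
    (hn : ∀ j, 0 < n j) (hk : ∀ j, 1 ≤ k j) (hkL : 2 ≤ k L) :
    ∏ j, ((n j : ℝ) ^ k j)⁻¹ * n j ≤ (n L : ℝ)⁻¹ := by
  classical
  have hn1 (j : ι) : (1 : ℝ) ≤ n j := by exact_mod_cast hn j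
  rw [← mul_prod_erase univ _ (mem_univ L)]
  refine (mul_le_of_le_one_right (by positivity) ?_).trans ?_
  · exact prod_le_one (fun j _ => by positivity)
      fun j _ => by simpa using inv_pow_mul_self_le (hn1 j) (m := 0) (hk j)
  · simpa using inv_pow_mul_self_le (hn1 L) (m := 1) hkL

theorem ohno_term_le_prod_rpow {ι : Type*} [Fintype ι] [DecidableEq ι] {n k : ι → ℕ} {i L : ι}
    (hn : Function.Injective n) (hn0 : ∀ j, 0 < n j) (hnL : ∀ j, n j ≤ n L)
    (hk : ∀ j, 1 ≤ k j) (hkL : 2 ≤ k L) {σ ε : ℝ} (hε : 0 ≤ ε)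
    (hεσ : Fintype.card ι * ε ≤ 1 + σ) (hε1 : Fintype.card ι * ε ≤ 1) :
    (∏ j, ((n j : ℝ) ^ k j)⁻¹) * (n i : ℝ) ^ (-σ) *
        ∏ j ∈ univ.erase i, (n j : ℝ) / |(n j : ℝ) - n i| ≤
      ∏ j, |(shiftAt i (fun j => (n j : ℤ)) j : ℝ)| ^ (-(1 + ε)) := by
  set M : ι → ℝ := fun j => |(shiftAt i (fun j => (n j : ℤ)) j : ℝ)|
  set N : ℝ := (n L : ℝ)
  have hn1 (j : ι) : (1 : ℝ) ≤ n j := by exact_mod_cast hn0 j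
  have hM_self : M i = n i := by simp [M, shiftAt]
  have hM_ne {j : ι} (hj : j ≠ i) : M j = |(n j : ℝ) - n i| := by
    simp [M, shiftAt, Function.update_of_ne hj]
  have hM1 (j : ι) : 1 ≤ M j := by
    have : shiftAt i (fun j => (n j : ℤ)) j ≠ 0 := by
      by_cases hj : j = i
      · subst hj; simp [shiftAt, (hn0 j).ne']
      · simp [shiftAt, Function.update_of_ne hj, sub_eq_zero, hn.ne hj]
    simp only [M]; exact_mod_cast Int.one_le_abs this
  have hMN (j : ι) : M j ≤ N := by
    by_cases hj : j = i
    · rw [hj, hM_self]; exact Nat.cast_le.mpr (hnL i)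
    · rw [hM_ne hj]
      exact abs_sub_le_of_nonneg_of_le (by positivity) (Nat.cast_le.mpr (hnL j))
        (by positivity) (Nat.cast_le.mpr (hnL i))
  have hN : 0 < N := zero_lt_one.trans_le (hn1 L)
  have hM0 (j : ι) : 0 < M j := zero_lt_one.trans_le (hM1 j)
  have h_erase : ∏ j ∈ univ.erase i, (n j : ℝ) / |(n j : ℝ) - n i| = ∏ j, (n j : ℝ) / M j := by
    rw [← prod_erase univ (f := fun j => (n j : ℝ) / M j) (a := i) (by simp [hM_self, (hn0 i).ne'])]
    exact prod_congr rfl fun j hj => by rw [hM_ne (ne_of_mem_erase hj)]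
  have h_ni : (n i : ℝ) ^ (-σ) ≤ N ^ (1 - Fintype.card ι * ε) :=
    (Real.rpow_le_rpow_of_exponent_le (hn1 i) (by linarith)).trans
      (Real.rpow_le_rpow (by positivity) (Nat.cast_le.mpr (hnL i)) (by linarith))
  have h_M : N ^ (-(Fintype.card ι * ε)) ≤ ∏ j, M j ^ (-ε) :=
    calc N ^ (-(Fintype.card ι * ε)) = ∏ _j : ι, N ^ (-ε) := by
          rw [prod_const, card_univ, ← Real.rpow_natCast, ← Real.rpow_mul hN.le]; ring_nf
      _ ≤ ∏ j, M j ^ (-ε) := prod_le_prod (fun _ _ => by positivity)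
          fun j _ => Real.rpow_le_rpow_of_nonpos (hM0 j) (hMN j) (by linarith)
  calc (∏ j, ((n j : ℝ) ^ k j)⁻¹) * (n i : ℝ) ^ (-σ) *
        ∏ j ∈ univ.erase i, (n j : ℝ) / |(n j : ℝ) - n i|
      = (∏ j, ((n j : ℝ) ^ k j)⁻¹ * n j) * (n i : ℝ) ^ (-σ) * ∏ j, (M j)⁻¹ := by
        simp only [h_erase, prod_mul_distrib, prod_div_distrib, prod_inv_distrib]; ring
    _ ≤ N⁻¹ * N ^ (1 - Fintype.card ι * ε) * ∏ j, (M j)⁻¹ := by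
        gcongr
        exact prod_inv_pow_mul_self_le hn0 hk hkL
    _ = N ^ (-(Fintype.card ι * ε)) * ∏ j, (M j)⁻¹ := by
        rw [← Real.rpow_neg_one, ← Real.rpow_add hN]; ring_nf
    _ ≤ (∏ j, M j ^ (-ε)) * ∏ j, (M j)⁻¹ := by gcongr
    _ = ∏ j, M j ^ (-(1 + ε)) := by
        rw [← prod_mul_distrib]
        refine prod_congr rfl fun j _ => ?_
        rw [neg_add, Real.rpow_add (hM0 j), Real.rpow_neg_one, mul_comm]

/-- **Absolute convergence of the Ohno function series.** For an admissible index
`(k₁, …, k_{r+1})` and `s ∈ ℂ` with `Re s > -1`, the double series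
`I_k(s) = ∑_{i} ∑_{0<n₁<⋯<n_{r+1}} (∏_j n_j^{-k_j}) n_i^{-s} ∏_{j≠i} n_j/(n_j-n_i)`
converges absolutely. -/
theorem ohnoFun_summable (r : ℕ) (k : Fin (r + 1) → ℕ)
    (hk1 : ∀ i, 1 ≤ k i) (hk2 : 2 ≤ k (Fin.last r))
    (s : ℂ) (hs : -1 < s.re) :
    Summable (fun p : Fin (r + 1) ×
        {n : Fin (r + 1) → ℕ // StrictMono n ∧ ∀ i, 0 < n i} =>
      ‖(∏ j, ((p.2.1 j : ℂ) ^ k j)⁻¹) * (p.2.1 p.1 : ℂ) ^ (-s) *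
        ∏ j ∈ Finset.univ.erase p.1,
          (p.2.1 j : ℂ) / ((p.2.1 j : ℂ) - (p.2.1 p.1 : ℂ))‖) := by
  obtain ⟨ε, hε, hcard⟩ :
      ∃ ε : ℝ, 0 < ε ∧ (Fintype.card (Fin (r + 1)) : ℝ) * ε = min (1 + s.re) 1 :=
    ⟨min (1 + s.re) 1 / (r + 1), div_pos (lt_min (by linarith) one_pos) (by positivity), by
      rw [Fintype.card_fin]; push_cast; exact mul_div_cancel₀ _ (by positivity)⟩
  have h_dom : Summable fun v : Fin (r + 1) → ℤ => ∏ j, |(v j : ℝ)| ^ (-(1 + ε)) :=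
    summable_fintype_prod_of_nonneg (f := fun _ (x : ℤ) => |(x : ℝ)| ^ (-(1 + ε)))
      (fun _ _ => by positivity)
      fun _ => Real.summable_abs_int_rpow (by linarith)
  refine (summable_prod_of_nonneg fun _ => norm_nonneg _).2 ⟨fun i => ?_, .of_finite⟩
  have h_inj : Function.Injective fun n : {n : Fin (r + 1) → ℕ // StrictMono n ∧ ∀ i, 0 < n i} =>
      shiftAt i fun j => (n.1 j : ℤ) :=
    (shiftAt_injective i).comp (Nat.cast_injective.comp_left.comp Subtype.val_injective)
  refine .of_nonneg_of_le (fun _ => norm_nonneg _) ?_ (h_dom.comp_injective h_inj)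
  rintro ⟨n, hn, hn0⟩
  rw [norm_ohno_term k n i (hn0 i)]
  exact ohno_term_le_prod_rpow hn.injective hn0 (fun j => hn.monotone (Fin.le_last j)) hk1 hk2 hε.le
    (hcard.trans_le (min_le_left _ _)) (hcard.trans_le (min_le_right _ _))
end

section
/- For every skew shape δ = λ/μ and every k ∈ W_δ, the Schur multiple zeta series ζ_δ(k) = Σ_{N∈SSYT_δ} ∏_{(i,j)∈D_δ} n_{ij}^(−k_{ij}) converges absolutely. -/
/-- `N` is a semistandard Young tableau on the (finite) cell set `D`:
entries are positive, weakly increasing along rows, strictly increasing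
down columns. -/
def IsSSYT (D : Finset (ℕ × ℕ)) (N : {p : ℕ × ℕ // p ∈ D} → ℕ) : Prop :=
  (∀ p, 0 < N p) ∧
  (∀ p q : {p : ℕ × ℕ // p ∈ D}, p.1.1 = q.1.1 → p.1.2 ≤ q.1.2 → N p ≤ N q) ∧
  (∀ p q : {p : ℕ × ℕ // p ∈ D}, p.1.2 = q.1.2 → p.1.1 < q.1.1 → N p < N q)

/-!
Every entry of a tableau `N` is bounded by an entry at a corner: among the cells whose entry is at
least `N p`, one maximising `i + j` cannot have a neighbour to the right or below, since that
neighbour's entry would be at least as large. With `A = ∏ N p`, `B = ∏_{corners} N c` and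
`d = |D|` this gives `A ≤ B ^ (d + 1)`, hence `A ^ (1 + 1/(d+1)) ≤ A * B ≤ ∏ N p ^ k p`, because
`k ≥ 1` everywhere and `k ≥ 2` at corners. So the series is dominated by
`∑_{n : D → ℕ} ∏_p n_p ^ -(1 + 1/(d+1)) = ζ(1 + 1/(d+1)) ^ d`.
-/

open Finset

theorem summable_pi_prod_of_nonneg {ι κ : Type*} [Fintype ι] {f : κ → ℝ} (hf0 : ∀ x, 0 ≤ f x)
    (hf : Summable f) : Summable fun g : ι → κ => ∏ i, f (g i) := by
  suffices h : ∀ n, Summable fun g : Fin n → κ => ∏ i, f (g i) by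
    let e := Fintype.equivFin ι
    refine ((h _).comp_injective (e.arrowCongr (Equiv.refl κ)).injective).congr fun g => ?_
    exact Fintype.prod_equiv e.symm _ (fun i => f (g i)) fun _ => rfl
  intro n
  induction n with
  | zero => exact Summable.of_finite
  | succ n ih =>
    refine ((hf.mul_of_nonneg ih hf0 fun g => prod_nonneg fun i _ => hf0 _).comp_injective
      (Fin.consEquiv fun _ => κ).symm.injective).congr fun g => ?_
    exact (Fin.prod_univ_succ fun i => f (g i)).symm

theorem Real.rpow_one_add_inv_le_mul {a b : ℝ} {n : ℕ} (ha : 0 ≤ a) (hb : 0 ≤ b) (hn : 0 < n)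
    (hab : a ≤ b ^ n) : a ^ (1 + (n : ℝ)⁻¹) ≤ a * b := by
  have hn' : (0 : ℝ) < n := Nat.cast_pos.mpr hn
  rcases ha.eq_or_lt with rfl | ha
  · rw [Real.zero_rpow (by positivity), zero_mul]
  rw [Real.rpow_add ha, Real.rpow_one]
  refine mul_le_mul_of_nonneg_left ?_ ha.le
  rwa [Real.rpow_inv_le_iff_of_pos ha.le hb hn', Real.rpow_natCast]

def IsCornerCell (D : Finset (ℕ × ℕ)) (p : D) : Prop :=
  (p.1.1 + 1, p.1.2) ∉ D ∧ (p.1.1, p.1.2 + 1) ∉ D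

instance (D : Finset (ℕ × ℕ)) : DecidablePred (IsCornerCell D) :=
  fun _ => inferInstanceAs (Decidable (_ ∧ _))

namespace IsSSYT

variable {D : Finset (ℕ × ℕ)} {N : D → ℕ}

theorem exists_isCornerCell_le (hN : IsSSYT D N) (p : D) : ∃ c, IsCornerCell D c ∧ N p ≤ N c := by
  obtain ⟨c, hc, hmax⟩ := (univ.filter fun q => N p ≤ N q).exists_max_image
    (fun q : D => q.1.1 + q.1.2) ⟨p, by simp⟩
  have hpc : N p ≤ N c := (mem_filter.mp hc).2
  refine ⟨c, ⟨fun hdown => ?_, fun hright => ?_⟩, hpc⟩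
  · have := hmax ⟨_, hdown⟩ <| mem_filter.mpr
      ⟨mem_univ _, hpc.trans (hN.2.2 c ⟨_, hdown⟩ rfl (lt_add_one _)).le⟩
    simp at this
  · have := hmax ⟨_, hright⟩ <| mem_filter.mpr
      ⟨mem_univ _, hpc.trans (hN.2.1 c ⟨_, hright⟩ rfl (Nat.le_succ _))⟩
    simp at this

theorem prod_le_prod_corners_pow (hN : IsSSYT D N) :
    ∏ p, N p ≤ (∏ c with IsCornerCell D c, N c) ^ D.card := by
  rw [← Fintype.card_coe D]
  refine prod_le_pow_card _ _ _ fun p _ => ?_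
  obtain ⟨c, hc, hpc⟩ := hN.exists_isCornerCell_le p
  exact hpc.trans <| Nat.le_of_dvd (prod_pos fun q _ => hN.1 q) <|
    dvd_prod_of_mem N (mem_filter.mpr ⟨mem_univ c, hc⟩)

theorem prod_mul_prod_corners_le (hN : IsSSYT D N) {k : D → ℕ} (hk1 : ∀ p, 1 ≤ k p)
    (hk2 : ∀ p, IsCornerCell D p → 2 ≤ k p) :
    (∏ p, N p) * ∏ c with IsCornerCell D c, N c ≤ ∏ p, N p ^ k p := by
  rw [prod_filter, ← prod_mul_distrib]
  refine prod_le_prod' fun p _ => ?_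
  split_ifs with hc
  · calc N p * N p = N p ^ 2 := (sq _).symm
      _ ≤ N p ^ k p := Nat.pow_le_pow_right (hN.1 p) (hk2 p hc)
  · calc N p * 1 = N p ^ 1 := by rw [mul_one, pow_one]
      _ ≤ N p ^ k p := Nat.pow_le_pow_right (hN.1 p) (hk1 p)

theorem prod_inv_pow_le (hN : IsSSYT D N) {k : D → ℕ} (hk1 : ∀ p, 1 ≤ k p)
    (hk2 : ∀ p, IsCornerCell D p → 2 ≤ k p) :
    ∏ p, ((N p : ℝ) ^ k p)⁻¹ ≤ ∏ p, ((N p : ℝ) ^ (1 + ((D.card + 1 : ℕ) : ℝ)⁻¹))⁻¹ := by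
  have hA : 0 < ∏ p, N p := prod_pos fun p _ => hN.1 p
  have hB : 0 < ∏ c with IsCornerCell D c, N c := prod_pos fun p _ => hN.1 p
  have hAB : ∏ p, N p ≤ (∏ c with IsCornerCell D c, N c) ^ (D.card + 1) :=
    hN.prod_le_prod_corners_pow.trans (Nat.pow_le_pow_right hB D.card.le_succ)
  have hmul : (∏ p, (N p : ℝ)) * ∏ c with IsCornerCell D c, (N c : ℝ) ≤ ∏ p, (N p : ℝ) ^ k p := by
    exact_mod_cast hN.prod_mul_prod_corners_le hk1 hk2
  have key := (Real.rpow_one_add_inv_le_mul (by positivity) (by positivity) D.card.succ_pos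
    (by exact_mod_cast hAB)).trans hmul
  rw [prod_inv_distrib, prod_inv_distrib, Real.finsetProd_rpow _ _ fun p _ => by positivity]
  exact inv_anti₀ (Real.rpow_pos_of_pos (by exact_mod_cast hA) _) key

end IsSSYT

theorem schurZeta_summable_general
    (D : Finset (ℕ × ℕ))
    (k : {p : ℕ × ℕ // p ∈ D} → ℕ)
    (hk1 : ∀ p, 1 ≤ k p)
    (hk2 : ∀ p : {p : ℕ × ℕ // p ∈ D},
      (p.1.1 + 1, p.1.2) ∉ D → (p.1.1, p.1.2 + 1) ∉ D → 2 ≤ k p) :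
    Summable (fun N : {N : {p : ℕ × ℕ // p ∈ D} → ℕ // IsSSYT D N} =>
      ∏ p, ((N.1 p : ℝ) ^ k p)⁻¹) := by
  have hr : 1 < 1 + ((D.card + 1 : ℕ) : ℝ)⁻¹ := lt_add_of_pos_right 1 (by positivity)
  have hdom := (summable_pi_prod_of_nonneg (ι := D) (fun m : ℕ => by positivity)
    (Real.summable_nat_rpow_inv.mpr hr)).comp_injective (Subtype.val_injective (p := IsSSYT D))
  refine Summable.of_nonneg_of_le (fun N => by positivity) (fun N => ?_) hdom
  exact N.2.prod_inv_pow_le hk1 fun p hp => hk2 p hp.1 hp.2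

/-- **Absolute convergence of Schur multiple zeta values.** Let `λ, μ` be
partitions (non-increasing, with `μᵢ ≤ λᵢ`) and let `D` be the finite cell set
of the skew shape `δ = λ/μ`, i.e. `(i,j) ∈ D ↔ μᵢ < j ≤ λᵢ`. For `k ∈ W_δ`
(all entries `≥ 1` and entries at corners `≥ 2`), the series
`ζ_δ(k) = ∑_{N ∈ SSYT_δ} ∏_{(i,j)∈D} n_{ij}^{-k_{ij}}` converges absolutely
(all terms are nonnegative, so summability is absolute convergence). -/
theorem schurZeta_summable (lam mu : ℕ → ℕ)
    (hlam : Antitone lam) (hmu : Antitone mu) (hle : ∀ i, mu i ≤ lam i)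
    (D : Finset (ℕ × ℕ))
    (hD : ∀ p : ℕ × ℕ, p ∈ D ↔ mu p.1 < p.2 ∧ p.2 ≤ lam p.1)
    (k : {p : ℕ × ℕ // p ∈ D} → ℕ)
    (hk1 : ∀ p, 1 ≤ k p)
    (hk2 : ∀ p : {p : ℕ × ℕ // p ∈ D},
      (p.1.1 + 1, p.1.2) ∉ D → (p.1.1, p.1.2 + 1) ∉ D → 2 ≤ k p) :
    Summable (fun N : {N : {p : ℕ × ℕ // p ∈ D} → ℕ // IsSSYT D N} =>
      ∏ p, ((N.1 p : ℝ) ^ k p)⁻¹) :=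
  schurZeta_summable_general D k hk1 hk2
end
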